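/- Let d ≥ 2. For every 0 < β < β_c, every pair of sets S, Λ with 0 ∈ S ⊆ Λ ⊆ ℤ^d, and every x ∈ Λ, one has the Simon–Lieb upper bound G_β^Λ(0,x) ≤ G_β^S(0,x) + Σ_{y∈S, z∈Λ∖S, y∼z} G_β^S(0,y)·β·G_β^Λ(z,x). -/

import Mathlib

open scoped ENNReal

namespace WSAW

/-- Vertices of the hypercubic lattice `ℤ^d`. -/
abbrev V (d : ℕ) := Fin d → ℤ

/-- Nearest-neighbour relation on `ℤ^d`. -/
def Adj {d : ℕ} (x y : V d) : Prop := (∑ i, (x i - y i).natAbs) = 1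

/-- A finite nearest-neighbour path in `ℤ^d` with `len` edges. -/
structure SAWPath (d : ℕ) where
  len : ℕ
  f : Fin (len + 1) → V d
  adj : ∀ i : Fin len, Adj (f i.castSucc) (f i.succ)

/-- The weight `ρ(γ) = ∏_{0 ≤ s < t ≤ |γ|} (1 - λ 1[γ(s) = γ(t)])`. -/
noncomputable def weight {d : ℕ} (lam : ℝ) (γ : SAWPath d) : ℝ :=
  ∏ s : Fin (γ.len + 1), ∏ t : Fin (γ.len + 1),
    if s < t ∧ γ.f s = γ.f t then 1 - lam else 1

/-- Paths from `x` to `y` staying inside `Λ`. -/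
def PathsIn {d : ℕ} (Λ : Set (V d)) (x y : V d) : Set (SAWPath d) :=
  {γ | γ.f 0 = x ∧ γ.f (Fin.last γ.len) = y ∧ ∀ i, γ.f i ∈ Λ}

/-- The two-point function `G_β^Λ(x,y)`, valued in `ℝ≥0∞`. -/
noncomputable def G {d : ℕ} (lam β : ℝ) (Λ : Set (V d)) (x y : V d) : ℝ≥0∞ :=
  ∑' γ : PathsIn Λ x y, ENNReal.ofReal (β ^ (γ.1.len) * weight lam γ.1)

/-- The susceptibility `χ(β)`. -/
noncomputable def chi (d : ℕ) (lam β : ℝ) : ℝ≥0∞ :=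
  ∑' x : V d, G lam β Set.univ 0 x

/-- The critical point `β_c`. -/
noncomputable def betaC (d : ℕ) (lam : ℝ) : ℝ :=
  sSup {β : ℝ | 0 ≤ β ∧ chi d lam β < ⊤}

/-- `φ_β(S) = Σ_{y ∈ S, z ∉ S, y ∼ z} β G_β^S(0,y)`. -/
noncomputable def phi (d : ℕ) (lam β : ℝ) (S : Set (V d)) : ℝ≥0∞ :=
  ∑' p : {p : V d × V d // p.1 ∈ S ∧ p.2 ∉ S ∧ Adj p.1 p.2},
    ENNReal.ofReal β * G lam β S 0 p.1.1

/-- The `ℓ^∞` norm of a vertex. -/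
def normInf {d : ℕ} (x : V d) : ℕ := Finset.univ.sup fun i => (x i).natAbs

/-- The box `Λ_n = {x : |x| ≤ n}`. -/
def box (d : ℕ) (n : ℕ) : Set (V d) := {x | normInf x ≤ n}

/-- The length `L_β(ε) = inf {k ≥ 1 : φ_β(Λ_k) ≤ 1 - ε}` (equal to `∞` if no such `k`). -/
noncomputable def Leps (d : ℕ) (lam β ε : ℝ) : ℝ≥0∞ :=
  sInf {L : ℝ≥0∞ | ∃ k : ℕ, L = k ∧ 1 ≤ k ∧ phi d lam β (box d k) ≤ ENNReal.ofReal (1 - ε)}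

/-- The sharp length `L_β = inf {k ≥ 1 : φ_β(Λ_k) ≤ e^{-2}}` (equal to `∞` if no such `k`). -/
noncomputable def Lsharp (d : ℕ) (lam β : ℝ) : ℝ≥0∞ :=
  Leps d lam β (1 - Real.exp (-2))

/-- The first coordinate `x₁` of a vertex. -/
def firstCoord {d : ℕ} (x : V d) : ℤ := if h : 0 < d then x ⟨0, h⟩ else 0

/-- The half-space `ℍ = ℤ_{≥0} × ℤ^{d-1}`. -/
def halfspace (d : ℕ) : Set (V d) := {x | 0 ≤ firstCoord x}

/-- The shifted half-space `ℍ_m = -m e₁ + ℍ = {x : x₁ ≥ -m}`. -/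
def Hset (d : ℕ) (m : ℤ) : Set (V d) := {x | -m ≤ firstCoord x}

/-- The boundary `∂S`: vertices of `S` with a neighbour outside `S`. -/
def bdry {d : ℕ} (S : Set (V d)) : Set (V d) := {y | y ∈ S ∧ ∃ z, z ∉ S ∧ Adj y z}

/-- Condition `(ℓ¹_β)`. -/
def ellOne (d : ℕ) (lam β : ℝ) : Prop :=
  ∀ n : ℕ, phi d lam β (Hset d n) < ENNReal.ofReal (1 + 1 / (2 * d))

/-- Condition `(ℓ∞_β)`. -/
def ellInf (d : ℕ) (C lam β : ℝ) : Prop :=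
  ∀ n : ℕ, ∀ x ∈ bdry (Hset d n),
    G lam β (Hset d n) 0 x < ENNReal.ofReal (C / ((max 1 n : ℕ) : ℝ) ^ (d - 1))

/-- `β*(C,λ)`. -/
noncomputable def betaStar (d : ℕ) (C lam : ℝ) : ℝ :=
  sSup {β : ℝ | β ∈ Set.Icc 0 (betaC d lam) ∧ ellOne d lam β ∧ ellInf d C lam β}

/-- `E_β^{S,Λ}(u)`. -/
noncomputable def Efun (d : ℕ) (lam β : ℝ) (S Λ : Set (V d)) (u : V d) : ℝ≥0∞ :=
  ∑' p : {p : V d × V d // p.1 ∈ S ∧ p.2 ∈ Λ \ S ∧ Adj p.1 p.2},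
    G lam β S 0 u * G lam β S u p.1.1 * ENNReal.ofReal β * G lam β Λ p.1.2 u

/-- The error amplitude `E_β^{S,Λ} = Σ_{u ∈ S} E_β^{S,Λ}(u)`. -/
noncomputable def Eamp (d : ℕ) (lam β : ℝ) (S Λ : Set (V d)) : ℝ≥0∞ :=
  ∑' u : S, Efun d lam β S Λ u

/-- The set of blocks `ℬ`. -/
def Blocks (d : ℕ) : Set (Set (V d)) :=
  {B | ∃ a b : V d, (∀ i, a i ≤ 0) ∧ (∀ i, 0 ≤ b i) ∧
    B = {x | ∀ i, a i ≤ x i ∧ x i ≤ b i}}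


/-!
A path from `a` to `x` in `Λ` either stays in `S`, and is counted by `G_β^S(a,x)`, or has a first
step `y → z` leaving `S`. Cutting it there leaves a path `a → y` inside `S`, the edge `yz`, and a
path `z → x` inside `Λ`. The cut is injective, since the two pieces concatenate back to the path,
and it does not decrease the weight: `ρ(γ) = (1 - λ)^N(γ)` with `N` the number of coincidences
`s < t, γ(s) = γ(t)`, and the coincidences of the two pieces are distinct coincidences of `γ`.
-/

namespace SAWPath

open Finset

variable {d : ℕ}

def take (γ : SAWPath d) (k : ℕ) (hk : k ≤ γ.len) : SAWPath d where
  len := k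
  f i := γ.f (Fin.castLE (by omega) i)
  adj i := γ.adj (Fin.castLE hk i)

def drop (γ : SAWPath d) (k : ℕ) (hk : k ≤ γ.len) : SAWPath d where
  len := γ.len - k
  f i := γ.f ⟨k + i, by omega⟩
  adj i := γ.adj ⟨k + i, by omega⟩

@[simp]
theorem len_take (γ : SAWPath d) (k : ℕ) (hk : k ≤ γ.len) : (γ.take k hk).len = k := rfl

@[simp]
theorem len_drop (γ : SAWPath d) (k : ℕ) (hk : k ≤ γ.len) : (γ.drop k hk).len = γ.len - k := rfl

-- Comparing vertex lists sidesteps transport between `Fin` types of different lengths.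
def vertices (γ : SAWPath d) : List (V d) := List.ofFn γ.f

theorem vertices_injective : Function.Injective (vertices (d := d)) := by
  rintro ⟨n, f, hf⟩ ⟨n', f', hf'⟩ h
  obtain ⟨hlen, hff⟩ := Sigma.mk.inj_iff.mp (List.ofFn_inj'.mp h)
  obtain rfl : n = n' := by simpa using hlen
  obtain rfl : f = f' := eq_of_heq hff
  rfl

theorem vertices_take_append_drop (γ : SAWPath d) (k : ℕ) (hk : k < γ.len) :
    (γ.take k hk.le).vertices ++ (γ.drop (k + 1) hk).vertices = γ.vertices := by
  refine List.ext_getElem (by simp [vertices, take, drop]; omega) fun i h₁ h₂ => ?_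
  simp only [vertices, List.getElem_append, List.getElem_ofFn, List.length_ofFn, take, drop]
  split_ifs
  · rfl
  · congr 1; ext; simp; omega

def coincidences (γ : SAWPath d) : Finset (Fin (γ.len + 1) × Fin (γ.len + 1)) :=
  {p | p.1 < p.2 ∧ γ.f p.1 = γ.f p.2}

theorem weight_eq_pow (lam : ℝ) (γ : SAWPath d) :
    weight lam γ = (1 - lam) ^ #γ.coincidences := by
  rw [weight, ← prod_product', prod_ite, prod_const, prod_const_one, mul_one]
  rfl

theorem card_coincidences_take_add_drop_le (γ : SAWPath d) {k m : ℕ} (hkm : k ≤ m)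
    (hm : m ≤ γ.len) :
    #(γ.take k (hkm.trans hm)).coincidences + #(γ.drop m hm).coincidences ≤ #γ.coincidences := by
  set A : Finset (Fin (k + 1) × Fin (k + 1)) := (γ.take k (hkm.trans hm)).coincidences
  set B : Finset (Fin (γ.len - m + 1) × Fin (γ.len - m + 1)) := (γ.drop m hm).coincidences
  let e₁ : Fin (k + 1) × Fin (k + 1) → Fin (γ.len + 1) × Fin (γ.len + 1) :=
    Prod.map (Fin.castLE (by omega)) (Fin.castLE (by omega))
  let e₂ : Fin (γ.len - m + 1) × Fin (γ.len - m + 1) → Fin (γ.len + 1) × Fin (γ.len + 1) :=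
    Prod.map (fun i => ⟨m + i, by omega⟩) (fun i => ⟨m + i, by omega⟩)
  have he₁ : Function.Injective e₁ := by
    rintro ⟨a, b⟩ ⟨a', b'⟩ h
    simp_all [e₁, Fin.ext_iff]
  have he₂ : Function.Injective e₂ := by
    rintro ⟨a, b⟩ ⟨a', b'⟩ h
    simp_all [e₂, Fin.ext_iff]
  have hsub : A.image e₁ ∪ B.image e₂ ⊆ γ.coincidences := by
    simp only [union_subset_iff, image_subset_iff]
    refine ⟨fun p hp => ?_, fun p hp => ?_⟩ <;> rw [coincidences, mem_filter_univ] <;>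
      obtain ⟨hlt, heq⟩ := (mem_filter_univ _).mp hp
    · exact ⟨hlt, heq⟩
    · exact ⟨Nat.add_lt_add_left hlt m, heq⟩
  have hdisj : Disjoint (A.image e₁) (B.image e₂) := by
    simp only [disjoint_left, mem_image, not_exists, not_and]
    rintro _ ⟨p, hp, rfl⟩ q hq h
    obtain ⟨hp, -⟩ := (mem_filter_univ _).mp hp
    obtain ⟨hq, -⟩ := (mem_filter_univ _).mp hq
    simp only [e₁, e₂, Prod.ext_iff, Prod.map, Fin.ext_iff, Fin.val_castLE] at h
    rw [Fin.lt_def] at hp hq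
    have : (p.2 : ℕ) < k + 1 := p.2.isLt
    omega
  calc #A + #B = #(A.image e₁) + #(B.image e₂) := by
        rw [card_image_of_injective _ he₁, card_image_of_injective _ he₂]
    _ = #(A.image e₁ ∪ B.image e₂) := (card_union_of_disjoint hdisj).symm
    _ ≤ #γ.coincidences := card_le_card hsub

theorem weight_le_weight_take_mul_weight_drop {lam : ℝ} (hlam0 : 0 ≤ lam) (hlam1 : lam ≤ 1)
    (γ : SAWPath d) {k m : ℕ} (hkm : k ≤ m) (hm : m ≤ γ.len) :
    weight lam γ ≤ weight lam (γ.take k (hkm.trans hm)) * weight lam (γ.drop m hm) := by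
  simp only [weight_eq_pow, ← pow_add]
  exact pow_le_pow_of_le_one (by linarith) (by linarith)
    (card_coincidences_take_add_drop_le γ hkm hm)

theorem take_mem_pathsIn {S : Set (V d)} {a : V d} {γ : SAWPath d} {k : ℕ} (hk : k ≤ γ.len)
    (h0 : γ.f 0 = a) (hS : ∀ i : Fin (γ.len + 1), i.val ≤ k → γ.f i ∈ S) :
    γ.take k hk ∈ PathsIn S a (γ.f ⟨k, by omega⟩) :=
  ⟨h0, rfl, fun i => hS _ (Nat.lt_succ_iff.mp i.isLt)⟩

theorem drop_mem_pathsIn {Λ : Set (V d)} {b : V d} {γ : SAWPath d} {k : ℕ} (hk : k ≤ γ.len)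
    (hlast : γ.f (Fin.last _) = b) (hΛ : ∀ i, γ.f i ∈ Λ) :
    γ.drop k hk ∈ PathsIn Λ (γ.f ⟨k, by omega⟩) b :=
  ⟨congrArg γ.f (Fin.ext (by simp [drop])),
    (congrArg γ.f (Fin.ext (by simp [drop]; omega))).trans hlast, fun _ => hΛ _⟩

theorem exists_first_exit {S : Set (V d)} {γ : SAWPath d} (h0 : γ.f 0 ∈ S)
    (hexit : ∃ i, γ.f i ∉ S) :
    ∃ j : Fin γ.len, γ.f j.succ ∉ S ∧ ∀ i, i ≤ j.castSucc → γ.f i ∈ S := by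
  obtain ⟨i, hi, hmin⟩ := WellFounded.has_min wellFounded_lt {i | γ.f i ∉ S} hexit
  obtain ⟨j, rfl⟩ := Fin.exists_succ_eq.mpr (show i ≠ 0 by rintro rfl; exact hi h0)
  exact ⟨j, hi, fun i hij => by_contra fun h => hmin i h (hij.trans_lt j.castSucc_lt_succ)⟩

end SAWPath

section SimonLieb

variable {d : ℕ}

noncomputable def pathWeight (lam β : ℝ) (γ : SAWPath d) : ℝ≥0∞ :=
  ENNReal.ofReal (β ^ γ.len * weight lam γ)

theorem pathWeight_le_take_mul_drop {lam β : ℝ} (hlam0 : 0 ≤ lam) (hlam1 : lam ≤ 1) (hβ : 0 ≤ β)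
    (γ : SAWPath d) {k : ℕ} (hk : k < γ.len) :
    pathWeight lam β γ ≤
      pathWeight lam β (γ.take k hk.le) * ENNReal.ofReal β *
        pathWeight lam β (γ.drop (k + 1) hk) := by
  have hw : ∀ δ : SAWPath d, 0 ≤ weight lam δ := fun δ => by
    rw [SAWPath.weight_eq_pow]; exact pow_nonneg (by linarith) _
  have hpow : β ^ γ.len = β ^ k * β * β ^ (γ.len - (k + 1)) := by
    rw [← pow_succ, ← pow_add]; congr 1; omega
  have hpre : 0 ≤ β ^ k * weight lam (γ.take k hk.le) := mul_nonneg (pow_nonneg hβ _) (hw _)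
  rw [pathWeight, pathWeight, pathWeight, SAWPath.len_take, SAWPath.len_drop,
    ← ENNReal.ofReal_mul hpre, ← ENNReal.ofReal_mul (mul_nonneg hpre hβ)]
  refine ENNReal.ofReal_le_ofReal ?_
  calc β ^ γ.len * weight lam γ
      ≤ β ^ γ.len * (weight lam (γ.take k hk.le) * weight lam (γ.drop (k + 1) hk)) :=
        mul_le_mul_of_nonneg_left
          (SAWPath.weight_le_weight_take_mul_weight_drop hlam0 hlam1 γ k.le_succ hk)
          (by positivity)
    _ = β ^ k * weight lam (γ.take k hk.le) * β *
          (β ^ (γ.len - (k + 1)) * weight lam (γ.drop (k + 1) hk)) := by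
        rw [hpow]; ring

abbrev BoundaryEdges (S Λ : Set (V d)) : Type :=
  {p : V d × V d // p.1 ∈ S ∧ p.2 ∈ Λ \ S ∧ Adj p.1 p.2}

def ExitPaths (S Λ : Set (V d)) (a x : V d) : Set (SAWPath d) :=
  {γ | γ ∈ PathsIn Λ a x ∧ ∃ i, γ.f i ∉ S}

theorem pathsIn_subset_union_exitPaths (S Λ : Set (V d)) (a x : V d) :
    PathsIn Λ a x ⊆ PathsIn S a x ∪ ExitPaths S Λ a x := by
  intro γ hγ
  by_cases hS : ∀ i, γ.f i ∈ S
  · exact Or.inl ⟨hγ.1, hγ.2.1, hS⟩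
  · exact Or.inr ⟨hγ, not_forall.mp hS⟩

namespace ExitPaths

variable {S Λ : Set (V d)} {a x : V d}

theorem exists_first_exit (haS : a ∈ S) (γ : ExitPaths S Λ a x) :
    ∃ j : Fin γ.1.len, γ.1.f j.succ ∉ S ∧ ∀ i, i ≤ j.castSucc → γ.1.f i ∈ S :=
  SAWPath.exists_first_exit (by rw [γ.2.1.1]; exact haS) γ.2.2

noncomputable def splitAtFirstExit (haS : a ∈ S) (γ : ExitPaths S Λ a x) :
    Σ p : BoundaryEdges S Λ, PathsIn S a p.1.1 × PathsIn Λ p.1.2 x :=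
  let j := (exists_first_exit haS γ).choose
  have hj := (exists_first_exit haS γ).choose_spec
  ⟨⟨(γ.1.f j.castSucc, γ.1.f j.succ), hj.2 _ le_rfl, ⟨γ.2.1.2.2 _, hj.1⟩, γ.1.adj j⟩,
    ⟨_, SAWPath.take_mem_pathsIn j.isLt.le γ.2.1.1 fun i hi => hj.2 i hi⟩,
    ⟨_, SAWPath.drop_mem_pathsIn j.isLt γ.2.1.2.1 γ.2.1.2.2⟩⟩

theorem vertices_splitAtFirstExit (haS : a ∈ S) (γ : ExitPaths S Λ a x) :
    (splitAtFirstExit haS γ).2.1.1.vertices ++ (splitAtFirstExit haS γ).2.2.1.vertices =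
      γ.1.vertices :=
  SAWPath.vertices_take_append_drop _ _ (Fin.isLt _)

theorem splitAtFirstExit_injective (haS : a ∈ S) :
    Function.Injective (splitAtFirstExit (Λ := Λ) (x := x) haS) := fun γ γ' h =>
  Subtype.ext <| SAWPath.vertices_injective <| (vertices_splitAtFirstExit haS γ).symm.trans <|
    (congrArg (fun q => q.2.1.1.vertices ++ q.2.2.1.vertices) h).trans
      (vertices_splitAtFirstExit haS γ')

theorem tsum_pathWeight_le {lam β : ℝ} (hlam0 : 0 ≤ lam) (hlam1 : lam ≤ 1) (hβ : 0 ≤ β)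
    (haS : a ∈ S) :
    ∑' γ : ExitPaths S Λ a x, pathWeight lam β γ.1 ≤
      ∑' p : BoundaryEdges S Λ, G lam β S a p.1.1 * ENNReal.ofReal β * G lam β Λ p.1.2 x := by
  let g : (Σ p : BoundaryEdges S Λ, PathsIn S a p.1.1 × PathsIn Λ p.1.2 x) → ℝ≥0∞ :=
    fun q => pathWeight lam β q.2.1.1 * ENNReal.ofReal β * pathWeight lam β q.2.2.1
  calc ∑' γ : ExitPaths S Λ a x, pathWeight lam β γ.1
      ≤ ∑' γ : ExitPaths S Λ a x, g (splitAtFirstExit haS γ) :=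
        ENNReal.tsum_le_tsum fun γ => pathWeight_le_take_mul_drop hlam0 hlam1 hβ γ.1 (Fin.isLt _)
    _ ≤ ∑' q, g q := ENNReal.tsum_comp_le_tsum_of_injective (splitAtFirstExit_injective haS) g
    _ = _ := by
      rw [ENNReal.tsum_sigma']
      refine tsum_congr fun p => ?_
      dsimp only [g]
      rw [ENNReal.tsum_prod (f := fun (u : PathsIn S a p.1.1) (v : PathsIn Λ p.1.2 x) =>
        pathWeight lam β u.1 * ENNReal.ofReal β * pathWeight lam β v.1)]
      simp only [G, ENNReal.tsum_mul_left, ENNReal.tsum_mul_right, pathWeight]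

end ExitPaths

theorem G_le_G_add_tsum_exitPaths (lam β : ℝ) (S Λ : Set (V d)) (a x : V d) :
    G lam β Λ a x ≤ G lam β S a x + ∑' γ : ExitPaths S Λ a x, pathWeight lam β γ.1 :=
  (ENNReal.tsum_mono_subtype (pathWeight lam β) (pathsIn_subset_union_exitPaths S Λ a x)).trans
    (ENNReal.tsum_union_le _ _ _)

end SimonLieb

theorem statement4_general (d : ℕ) (lam : ℝ) (hlam0 : 0 ≤ lam) (hlam1 : lam ≤ 1)
    (β : ℝ) (hβ0 : 0 < β)
    (S Λ : Set (V d)) (h0S : (0 : V d) ∈ S) (x : V d) :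
    G lam β Λ 0 x ≤
      G lam β S 0 x +
        ∑' p : {p : V d × V d // p.1 ∈ S ∧ p.2 ∈ Λ \ S ∧ Adj p.1 p.2},
          G lam β S 0 p.1.1 * ENNReal.ofReal β * G lam β Λ p.1.2 x :=
  (G_le_G_add_tsum_exitPaths lam β S Λ 0 x).trans
    (add_le_add_right (ExitPaths.tsum_pathWeight_le hlam0 hlam1 hβ0.le h0S) _)

/-- **Simon–Lieb upper bound.** For `d ≥ 2`, `0 < β < β_c`, `0 ∈ S ⊆ Λ ⊆ ℤ^d` and `x ∈ Λ`:
`G_β^Λ(0,x) ≤ G_β^S(0,x) + Σ_{y ∈ S, z ∈ Λ∖S, y∼z} G_β^S(0,y) β G_β^Λ(z,x)`. -/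
theorem statement4 (d : ℕ) (hd : 2 ≤ d) (lam : ℝ) (hlam0 : 0 ≤ lam) (hlam1 : lam ≤ 1)
    (β : ℝ) (hβ0 : 0 < β) (hβc : β < betaC d lam)
    (S Λ : Set (V d)) (h0S : (0 : V d) ∈ S) (hSΛ : S ⊆ Λ) (x : V d) (hx : x ∈ Λ) :
    G lam β Λ 0 x ≤
      G lam β S 0 x +
        ∑' p : {p : V d × V d // p.1 ∈ S ∧ p.2 ∈ Λ \ S ∧ Adj p.1 p.2},
          G lam β S 0 p.1.1 * ENNReal.ofReal β * G lam β Λ p.1.2 x :=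
  statement4_general d lam hlam0 hlam1 β hβ0 S Λ h0S x
end WSAW
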